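/- arXiv:2601.22907 — 5 statements merged into one kernel-verified Lean document; each statement's English description precedes it below -/
import Mathlib

section
/- If W is a vector space over a field F and S : W → W is a linear endomorphism whose range has dimension equal to dim W (as cardinals), then there exist linear endomorphisms P, Q : W → W with P ∘ S ∘ Q = id. -/
theorem LinearMap.exists_comp_comp_eq_id_range {K V W : Type*} [DivisionRing K]
    [AddCommGroup V] [Module K V] [AddCommGroup W] [Module K W] (S : V →ₗ[K] W) :
    ∃ (P : W →ₗ[K] LinearMap.range S) (Q : LinearMap.range S →ₗ[K] V),
      P ∘ₗ S ∘ₗ Q = LinearMap.id := by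
  obtain ⟨P, hP⟩ := (LinearMap.range S).subtype.exists_leftInverse_of_injective
    (Submodule.ker_subtype _)
  obtain ⟨Q, hQ⟩ := S.rangeRestrict.exists_rightInverse_of_surjective S.range_rangeRestrict
  refine ⟨P, Q, ?_⟩
  calc P ∘ₗ S ∘ₗ Q = (P ∘ₗ (LinearMap.range S).subtype) ∘ₗ (S.rangeRestrict ∘ₗ Q) :=
        rfl
    _ = LinearMap.id := by rw [hP, hQ, LinearMap.id_comp]

/-- If the range of a linear endomorphism `S` of `W` has dimension equal to `dim W`
(as cardinals), then there exist `P, Q` with `P ∘ S ∘ Q = id`. -/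
theorem stmt_1 (F W : Type*) [Field F] [AddCommGroup W] [Module F W]
    (S : W →ₗ[F] W)
    (hS : Module.rank F (LinearMap.range S) = Module.rank F W) :
    ∃ P Q : W →ₗ[F] W, P ∘ₗ S ∘ₗ Q = LinearMap.id := by
  obtain ⟨P, Q, hPQ⟩ := S.exists_comp_comp_eq_id_range
  let e : LinearMap.range S ≃ₗ[F] W := LinearEquiv.ofRankEq _ _ hS
  refine ⟨e.toLinearMap ∘ₗ P, Q ∘ₗ e.symm.toLinearMap, ?_⟩
  calc (e.toLinearMap ∘ₗ P) ∘ₗ S ∘ₗ Q ∘ₗ e.symm.toLinearMap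
        = e.toLinearMap ∘ₗ (P ∘ₗ S ∘ₗ Q) ∘ₗ e.symm.toLinearMap := rfl
    _ = LinearMap.id := by rw [hPQ, LinearMap.id_comp, e.comp_symm]
end

section
/- Let A be an algebra over a field F and let c be a cardinal strictly larger than the dimension of A over F, with c infinite. Then the left action of A on W = A ⊗_F F^{(c)} (where F^{(c)} is the free F-vector space on a set of cardinality c) gives an injective F-algebra homomorphism φ : A → End_F(W), and for every nonzero a ∈ A the linear map φ(a) has rank equal to dim_F W. -/
/-!
Left multiplication by `a` on `A ⊗ F^{(c)}` is `(x ↦ a * x) ⊗ id`, and tensoring over a field is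
exact, so its range is `aA ⊗ F^{(c)}`, of dimension `dim(aA) · c`. For `a ≠ 0` we have
`1 ≤ dim(aA) ≤ dim A < c` with `c` infinite, so this product is `c`, which is also
`dim (A ⊗ F^{(c)})`. A nonzero `a` thus acts with nonzero rank, which gives injectivity.
-/

open TensorProduct

universe u v

section Rank

variable {F : Type u} [Field F] {M N Q : Type v}
  [AddCommGroup M] [Module F M] [AddCommGroup N] [Module F N] [AddCommGroup Q] [Module F Q]

theorem LinearMap.rank_range_rTensor (f : M →ₗ[F] N) :
    Module.rank F (LinearMap.range (f.rTensor Q)) =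
      Module.rank F (LinearMap.range f) * Module.rank F Q := by
  rw [LinearMap.rTensor_range, rank_range_of_injective _
    (Module.Flat.rTensor_preserves_injective_linearMap _ (Submodule.injective_subtype _)),
    rank_tensorProduct']

theorem rank_tensorProduct_eq_right_of_le (hM : Module.rank F M ≠ 0)
    (hle : Module.rank F M ≤ Module.rank F Q) (hQ : Cardinal.aleph0 ≤ Module.rank F Q) :
    Module.rank F (M ⊗[F] Q) = Module.rank F Q := by
  rw [rank_tensorProduct', Cardinal.mul_eq_right hQ hle hM]

end Rank

section LeftAction

variable (F : Type u) {A : Type v} [Field F] [Ring A] [Algebra F A]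
  (Q : Type v) [AddCommGroup Q] [Module F Q]

theorem Algebra.lsmul_tmul (a x : A) (v : Q) :
    Algebra.lsmul F F (A ⊗[F] Q) a (x ⊗ₜ[F] v) = (a * x) ⊗ₜ[F] v :=
  TensorProduct.smul_tmul' a x v

theorem Algebra.lsmul_tensorProduct_eq_rTensor_mulLeft (a : A) :
    (Algebra.lsmul F F (A ⊗[F] Q) a : A ⊗[F] Q →ₗ[F] A ⊗[F] Q) =
      (LinearMap.mulLeft F a).rTensor Q :=
  _root_.TensorProduct.ext' fun x v => Algebra.lsmul_tmul F Q a x v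

theorem rank_range_mulLeft_ne_zero {a : A} (ha : a ≠ 0) :
    Module.rank F (LinearMap.range (LinearMap.mulLeft F a)) ≠ 0 := by
  rw [Ne, Submodule.rank_eq_zero]
  exact (Submodule.ne_bot_iff _).2 ⟨a, ⟨1, mul_one a⟩, ha⟩

end LeftAction

/-- Let `A` be an algebra over a field `F` and `c` an infinite cardinal strictly larger than
`dim_F A`.  The left action of `A` on `W = A ⊗_F F^{(c)}` gives an injective `F`-algebra
homomorphism `φ : A → End_F(W)`, and for every nonzero `a ∈ A` the linear map `φ a` has
rank equal to `dim_F W`. -/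
theorem stmt_3 (F A : Type) [Field F] [Ring A] [Algebra F A]
    (c : Cardinal) (hc : Module.rank F A < c) (hinf : Cardinal.aleph0 ≤ c) :
    ∃ φ : A →ₐ[F] Module.End F (A ⊗[F] (c.out →₀ F)),
      Function.Injective φ ∧
      (∀ (a x : A) (v : c.out →₀ F), φ a (x ⊗ₜ[F] v) = (a * x) ⊗ₜ[F] v) ∧
      ∀ a : A, a ≠ 0 →
        Module.rank F (LinearMap.range (φ a)) = Module.rank F (A ⊗[F] (c.out →₀ F)) := by
  have hV : Module.rank F (c.out →₀ F) = c := by simp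
  have hrank (a : A) (ha : a ≠ 0) :
      Module.rank F (LinearMap.range (Algebra.lsmul F F (A ⊗[F] (c.out →₀ F)) a)) = c := by
    rw [Algebra.lsmul_tensorProduct_eq_rTensor_mulLeft, LinearMap.rank_range_rTensor, hV,
      Cardinal.mul_eq_right hinf ((Submodule.rank_le _).trans hc.le)
        (rank_range_mulLeft_ne_zero F ha)]
  have hW (a : A) (ha : a ≠ 0) : Module.rank F (A ⊗[F] (c.out →₀ F)) = c := by
    have : Nontrivial A := ⟨⟨a, 0, ha⟩⟩
    rw [rank_tensorProduct_eq_right_of_le rank_pos.ne' (by rw [hV]; exact hc.le) (by rwa [hV]), hV]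
  refine ⟨Algebra.lsmul F F _, (injective_iff_map_eq_zero _).2 fun a h => ?_,
    Algebra.lsmul_tmul F _, fun a ha => (hrank a ha).trans (hW a ha).symm⟩
  by_contra ha
  have := hrank a ha
  rw [h, LinearMap.range_zero, rank_bot] at this
  exact (Cardinal.aleph0_pos.trans_le hinf).ne this
end

section
/- Let R be an associative unital ring that embeds into an algebra A over a field F, and let r ∈ R be nonzero. Then there exists an associative unital ring L together with an injective ring homomorphism ι : R → L such that the two-sided ideal of L generated by ι(r) equals L. Moreover, if R is finitely generated as a ring, L can be chosen finitely generated. -/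
/-!
Embed `A` into `End_F(V)` for `V = I →₀ A`, acting by left multiplication in each coordinate,
where `I = List J` and `J` indexes an `F`-basis of `A`. Since `(l, j) ↦ j :: l` injects
`I × J` into `I`, there is an `F`-linear map `b : V → V` that spreads `V ≅ (I × J →₀ F)` onto
scalar multiples of `1` in distinct coordinates; left multiplication by any `x ≠ 0` is injective
on those, so `x * b` is injective and has a left inverse `a`. Then `a * x * b = 1`, so `x`
generates the unit ideal. For finite generation, pass to the subring generated by `a`, `b` and
the images of the generators of `R`.
-/

open Function Finsupp

universe u

theorem Module.End.exists_mul_mul_eq_one {K V : Type*} [DivisionRing K] [AddCommGroup V]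
    [Module K V] {T b : Module.End K V} (h : Function.Injective ⇑(T * b)) :
    ∃ a, a * T * b = 1 := by
  obtain ⟨a, ha⟩ := (T * b).exists_leftInverse_of_injective (LinearMap.ker_eq_bot.mpr h)
  exact ⟨a, by rw [mul_assoc]; exact ha⟩

section Spread

variable {F A : Type*} [Field F] [Ring A] [Algebra F A]

theorem Finsupp.lsmul_injective (I : Type*) [Nonempty I] :
    Injective (Algebra.lsmul F F (A := A) (I →₀ A)) := by
  intro x y h
  obtain ⟨i⟩ := ‹Nonempty I›
  simpa using congr($h (single i 1) i)

noncomputable def Finsupp.spread {I J : Type*} (B : Module.Basis J F A) (σ : I × J → I) :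
    Module.End F (I →₀ A) :=
  mapRange.linearMap (Algebra.linearMap F A) ∘ₗ lmapDomain F F σ ∘ₗ
    ((curryLinearEquiv F).symm : (I →₀ J →₀ F) ≃ₗ[F] I × J →₀ F).toLinearMap ∘ₗ
    mapRange.linearMap (B.repr : A →ₗ[F] J →₀ F)

theorem Finsupp.injective_lsmul_mul_spread {I J : Type*} (B : Module.Basis J F A)
    {σ : I × J → I} (hσ : Injective σ) {x : A} (hx : x ≠ 0) :
    Injective ⇑(Algebra.lsmul F F (I →₀ A) x * spread B σ) := by
  have hscale : Algebra.lsmul F F (I →₀ A) x ∘ₗ mapRange.linearMap (Algebra.linearMap F A) =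
      mapRange.linearMap (LinearMap.toSpanSingleton F A x) := by
    ext
    simp [Algebra.smul_def]
  rw [Module.End.mul_eq_comp, spread, ← LinearMap.comp_assoc, hscale]
  simp only [LinearMap.coe_comp, LinearEquiv.coe_coe]
  exact (mapRange_injective _ (map_zero _) (smul_left_injective F hx)).comp <|
    (mapDomain_injective hσ).comp <| (LinearEquiv.injective _).comp <|
    mapRange_injective _ (map_zero _) B.repr.injective

end Spread

theorem exists_injective_ringHom_mul_mul_eq_one (F : Type u) {A : Type u} [Field F] [Ring A]
    [Algebra F A] {x : A} (hx : x ≠ 0) :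
    ∃ (M : Type u) (_ : Ring M) (φ : A →+* M) (a b : M), Injective φ ∧ a * φ x * b = 1 := by
  let J := Module.Basis.ofVectorSpaceIndex F A
  let σ : List J × J → List J := fun p => p.2 :: p.1
  have hσ : Injective σ := fun p q h => by
    simpa [σ, and_comm, Prod.ext_iff] using h
  obtain ⟨a, ha⟩ := Module.End.exists_mul_mul_eq_one (Finsupp.injective_lsmul_mul_spread (Module.Basis.ofVectorSpace F A) hσ hx)
  exact ⟨_, inferInstance, (Algebra.lsmul F F _).toRingHom, a, _,
    Finsupp.lsmul_injective _, ha⟩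

theorem Subring.closure_closure_coe_preimage {M : Type*} [Ring M] {s : Set M} :
    closure (((↑) : closure s → M) ⁻¹' s) = ⊤ :=
  eq_top_iff.2 fun x _ ↦ Subtype.recOn x fun _ hx' ↦
    closure_induction (fun _ h ↦ subset_closure h) (zero_mem _) (one_mem _)
      (fun _ _ _ _ ↦ add_mem) (fun _ _ ↦ neg_mem) (fun _ _ _ _ ↦ mul_mem) hx'

theorem TwoSidedIdeal.span_singleton_eq_top_of_mul_mul_eq_one {M : Type*} [Ring M] {x a b : M}
    (h : a * x * b = 1) : span {x} = ⊤ :=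
  eq_top _ <| h ▸ mul_mem_right _ _ _ (mul_mem_left _ _ _ (subset_span rfl))

theorem exists_fg_of_mul_mul_eq_one {R M : Type} [Ring R] [Ring M] {ι : R →+* M}
    (hι : Injective ι) {r : R} {a b : M} (hab : a * ι r * b = 1)
    {s : Finset R} (hs : Subring.closure (s : Set R) = ⊤) :
    ∃ (L : Type) (_ : Ring L) (ι : R →+* L),
      Injective ι ∧ TwoSidedIdeal.span {ι r} = ⊤ ∧
      ∃ t : Finset L, Subring.closure (t : Set L) = ⊤ := by
  classical
  let S : Finset M := insert a (insert b (s.image ι))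
  let L := Subring.closure (S : Set M)
  have hιL : ∀ y, ι y ∈ L := by
    intro y
    have hy : ι y ∈ (Subring.closure (s : Set R)).map ι := ⟨y, hs ▸ Subring.mem_top y, rfl⟩
    rw [ι.map_closure] at hy
    refine Subring.closure_mono ?_ hy
    simp only [S, Finset.coe_insert, Finset.coe_image]
    exact (Set.subset_insert _ _).trans (Set.subset_insert _ _)
  have ha : a ∈ L := Subring.subset_closure (by simp [S])
  have hb : b ∈ L := Subring.subset_closure (by simp [S])
  refine ⟨L, inferInstance, ι.codRestrict L hιL, fun y z h ↦ hι congr($h.1), ?_,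
    S.preimage (↑) Subtype.val_injective.injOn, ?_⟩
  · exact TwoSidedIdeal.span_singleton_eq_top_of_mul_mul_eq_one (a := ⟨a, ha⟩) (b := ⟨b, hb⟩)
      (Subtype.ext hab)
  · rw [Finset.coe_preimage, Subring.closure_closure_coe_preimage]

/-- Let `R` be a ring embedding into an algebra `A` over a field `F` and `r ∈ R` nonzero.
Then there is a ring `L` and an injective ring homomorphism `ι : R → L` such that the
two-sided ideal of `L` generated by `ι r` is all of `L`.  Moreover, if `R` is finitely
generated as a ring, `L` can be chosen finitely generated. -/
theorem stmt_4 (R : Type) [Ring R] (F A : Type) [Field F] [Ring A] [Algebra F A]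
    (e : R →+* A) (he : Function.Injective e) (r : R) (hr : r ≠ 0) :
    (∃ (L : Type) (_ : Ring L) (ι : R →+* L),
        Function.Injective ι ∧ TwoSidedIdeal.span {ι r} = ⊤) ∧
    ((∃ s : Finset R, Subring.closure (s : Set R) = ⊤) →
      ∃ (L : Type) (_ : Ring L) (ι : R →+* L),
        Function.Injective ι ∧ TwoSidedIdeal.span {ι r} = ⊤ ∧
        ∃ t : Finset L, Subring.closure (t : Set L) = ⊤) := by
  obtain ⟨M, _, φ, a, b, hφ, hab⟩ :=
    exists_injective_ringHom_mul_mul_eq_one F ((map_ne_zero_iff e he).mpr hr)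
  have hι : Injective (φ.comp e) := hφ.comp he
  refine ⟨⟨M, inferInstance, φ.comp e, hι,
    TwoSidedIdeal.span_singleton_eq_top_of_mul_mul_eq_one hab⟩, ?_⟩
  rintro ⟨s, hs⟩
  exact exists_fg_of_mul_mul_eq_one hι hab hs
end

section
/- Let R be an associative unital ring and g a unit of R. Then the normal closure in GL₃(R) of the diagonal matrix diag(g,1,1) contains the elementary matrix E₁₂(1−g). -/
open Matrix
open scoped commutatorElement

/-!
Write `E_{ij}(a) = 1 + a e_{ij}` and `D = diag d` with `d j = 1`. Since `e_{ij} D = e_{ij}`,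
`D e_{ij} = d i • e_{ij}` and `e_{ij}² = 0`, the commutator `E_{ij}(a) D E_{ij}(-a) D⁻¹` is
`E_{ij}(a - d i a)`. For `a = 1` and `D = diag(g, 1, 1)` this is `E₁₂(1 - g)`, and a commutator
`⁅c, D⁆ = (c D c⁻¹) D⁻¹` always lies in the normal closure of `D`.
-/

theorem Subgroup.commutatorElement_mem_normalClosure {G : Type*} [Group G] (c d : G) :
    ⁅c, d⁆ ∈ Subgroup.normalClosure {d} :=
  Subgroup.commutator_le_right ⊤ _ <|
    Subgroup.commutator_mem_commutator (Subgroup.mem_top c) (Subgroup.subset_normalClosure rfl)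

namespace Matrix

variable {n R : Type*} [Fintype n] [DecidableEq n] [Ring R] {i j : n}

theorem diagonal_mul_single (d : n → R) (i j : n) (a : R) :
    diagonal d * single i j a = single i j (d i * a) := by
  ext k l
  rw [diagonal_mul]
  by_cases hk : i = k <;> by_cases hl : j = l <;> simp [hk, hl]

theorem single_mul_diagonal (d : n → R) (i j : n) (a : R) :
    single i j a * diagonal d = single i j (a * d j) := by
  ext k l
  rw [mul_diagonal]
  by_cases hk : i = k <;> by_cases hl : j = l <;> simp [hk, hl]

theorem one_add_single_mul_one_add_single (hij : i ≠ j) (a b : R) :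
    (1 + single i j a) * (1 + single i j b) = 1 + single i j (a + b) := by
  rw [Matrix.add_mul, Matrix.mul_add, Matrix.mul_add, single_mul_single_of_ne _ _ _ _ hij.symm,
    single_add]
  simp only [Matrix.one_mul, Matrix.mul_one, add_zero]
  abel

theorem one_add_single_mul_diagonal_mul_one_add_single_neg (hij : i ≠ j) {d : n → R}
    (hd : d j = 1) (a : R) :
    (1 + single i j a) * diagonal d * (1 + single i j (-a)) =
      (1 + single i j (a - d i * a)) * diagonal d := by
  simp only [Matrix.add_mul, Matrix.mul_add, Matrix.one_mul, single_mul_diagonal,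
    diagonal_mul_single, hd, mul_one, single_mul_single_of_ne _ _ _ _ hij.symm, add_zero,
    mul_neg, sub_eq_add_neg, single_add]
  abel

def elementaryUnit (hij : i ≠ j) (a : R) : (Matrix n n R)ˣ where
  val := 1 + single i j a
  inv := 1 + single i j (-a)
  val_inv := by rw [one_add_single_mul_one_add_single hij, add_neg_cancel, single_zero, add_zero]
  inv_val := by rw [one_add_single_mul_one_add_single hij, neg_add_cancel, single_zero, add_zero]

theorem commutatorElement_elementaryUnit_of_diagonal (hij : i ≠ j) {D : (Matrix n n R)ˣ}
    {d : n → R} (hD : (D : Matrix n n R) = diagonal d) (hd : d j = 1) (a : R) :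
    ⁅elementaryUnit hij a, D⁆ = elementaryUnit hij (a - d i * a) := by
  rw [commutatorElement_def, mul_inv_eq_iff_eq_mul]
  ext1
  simpa [elementaryUnit, hD] using one_add_single_mul_diagonal_mul_one_add_single_neg hij hd a

end Matrix

/-- Let `R` be an associative unital ring and `g` a unit of `R`.  The normal closure in
`GL₃(R)` of `diag(g,1,1)` contains the elementary matrix `E₁₂(1−g)`. -/
theorem stmt_8 (R : Type) [Ring R] (g : Rˣ)
    (D E : (Matrix (Fin 3) (Fin 3) R)ˣ)
    (hD : D.val = Matrix.diagonal ![(g : R), 1, 1])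
    (hE : E.val =
      (1 : Matrix (Fin 3) (Fin 3) R) + Matrix.single 0 1 (1 - (g : R))) :
    E ∈ Subgroup.normalClosure {D} := by
  have h01 : (0 : Fin 3) ≠ 1 := by decide
  have hcomm : E = ⁅elementaryUnit h01 (1 : R), D⁆ := by
    rw [commutatorElement_elementaryUnit_of_diagonal h01 hD rfl, mul_one]
    exact Units.ext hE
  exact hcomm ▸ Subgroup.commutatorElement_mem_normalClosure _ _
end

section
/- Let R be an associative unital ring and x ∈ R an element such that the two-sided ideal generated by x is all of R. Then the normal closure in GL₃(R) (or in the elementary subgroup E₃(R)) of the elementary matrix E₁₂(x) contains all elementary matrices E_{ij}(a) for i ≠ j and a ∈ R; in particular the normal closure contains E₃(R). -/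
/-!
For distinct indices `i, j, k` the commutator identity `⁅E_ij(a), E_jk(b)⁆ = E_ik(ab)` shows that,
for a normal subgroup `N` of `GLₙ(R)` with `n ≥ 3`, the set of `a` with `E_ij(a) ∈ N` does not
depend on the position `(i, j)` and is a two-sided ideal of `R`. For the normal closure of
`E₁₂(x)` this ideal contains `x`, hence is all of `R`.
-/

open Matrix

open scoped commutatorElement

namespace Matrix

variable {n R : Type*} [Fintype n] [DecidableEq n] [Ring R]

def elementary (i j : n) (hij : i ≠ j) (a : R) : (Matrix n n R)ˣ where
  val := 1 + single i j a
  inv := 1 + single i j (-a)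
  val_inv := by simp [mul_add, add_mul, hij.symm, add_assoc, ← single_neg]
  inv_val := by simp [mul_add, add_mul, hij.symm, add_assoc, ← single_neg]

section elementary

variable {i j k : n}

@[simp]
lemma val_elementary (hij : i ≠ j) (a : R) :
    (elementary i j hij a : Matrix n n R) = 1 + single i j a := rfl

@[simp]
lemma val_inv_elementary (hij : i ≠ j) (a : R) :
    (↑(elementary i j hij a)⁻¹ : Matrix n n R) = 1 + single i j (-a) := rfl

lemma elementary_add (hij : i ≠ j) (a b : R) :
    elementary i j hij (a + b) = elementary i j hij a * elementary i j hij b := by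
  ext : 1
  simp [mul_add, add_mul, hij.symm, single_add]
  abel

lemma elementary_zero (hij : i ≠ j) : elementary i j hij (0 : R) = 1 := by
  ext : 1
  simp

lemma elementary_neg (hij : i ≠ j) (a : R) :
    elementary i j hij (-a) = (elementary i j hij a)⁻¹ := by
  rw [eq_inv_iff_mul_eq_one, ← elementary_add, neg_add_cancel, elementary_zero]

lemma commutatorElement_elementary (hij : i ≠ j) (hjk : j ≠ k) (hik : i ≠ k) (a b : R) :
    ⁅elementary i j hij a, elementary j k hjk b⁆ = elementary i k hik (a * b) := by
  ext : 1
  simp [commutatorElement_def, mul_add, add_mul, hij.symm, hjk.symm, hik.symm, ← single_neg]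
  abel

end elementary

section NormalSubgroup

variable {N : Subgroup (Matrix n n R)ˣ} [N.Normal] {i j k l : n} {a : R}

lemma elementary_mem_of_mem_changeCol (hij : i ≠ j) (hik : i ≠ k)
    (h : elementary i j hij a ∈ N) : elementary i k hik a ∈ N := by
  obtain rfl | hjk := eq_or_ne j k
  · exact h
  rw [← mul_one a, ← commutatorElement_elementary hij hjk]
  exact Subgroup.commutator_le_left N ⊤ (Subgroup.commutator_mem_commutator h trivial)

lemma elementary_mem_of_mem_changeRow (hij : i ≠ j) (hkj : k ≠ j)
    (h : elementary i j hij a ∈ N) : elementary k j hkj a ∈ N := by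
  obtain rfl | hki := eq_or_ne k i
  · exact h
  rw [← one_mul a, ← commutatorElement_elementary hki hij]
  exact Subgroup.commutator_le_right ⊤ N (Subgroup.commutator_mem_commutator trivial h)

lemma elementary_mem_of_mem (hn : 3 ≤ ENat.card n) (hij : i ≠ j) (hkl : k ≠ l)
    (h : elementary i j hij a ∈ N) : elementary k l hkl a ∈ N := by
  obtain ⟨m, hmi, hmk⟩ := ENat.exists_ne_ne_of_three_le hn i k
  have him : elementary i m hmi.symm a ∈ N := elementary_mem_of_mem_changeCol hij _ h
  have hkm : elementary k m hmk.symm a ∈ N := elementary_mem_of_mem_changeRow _ _ him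
  exact elementary_mem_of_mem_changeCol _ _ hkm

variable (N) in
def elementaryLevel (hn : 3 ≤ ENat.card n) : TwoSidedIdeal R :=
  .mk' {a | ∀ i j (hij : i ≠ j), elementary i j hij a ∈ N}
    (fun i j hij ↦ by simp [elementary_zero])
    (fun ha hb i j hij ↦ by simpa [elementary_add] using N.mul_mem (ha i j hij) (hb i j hij))
    (fun ha i j hij ↦ by simpa [elementary_neg] using N.inv_mem (ha i j hij))
    (fun {b a} ha i j hij ↦ by
      obtain ⟨k, hki, hkj⟩ := ENat.exists_ne_ne_of_three_le hn i j
      rw [← commutatorElement_elementary hki.symm hkj hij]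
      exact Subgroup.commutator_le_right ⊤ N
        (Subgroup.commutator_mem_commutator trivial (ha k j hkj)))
    (fun {a b} ha i j hij ↦ by
      obtain ⟨k, hki, hkj⟩ := ENat.exists_ne_ne_of_three_le hn i j
      rw [← commutatorElement_elementary hki.symm hkj hij]
      exact Subgroup.commutator_le_left N ⊤
        (Subgroup.commutator_mem_commutator (ha i k hki.symm) trivial))

lemma mem_elementaryLevel (hn : 3 ≤ ENat.card n) :
    a ∈ elementaryLevel N hn ↔ ∀ i j (hij : i ≠ j), elementary i j hij a ∈ N :=
  TwoSidedIdeal.mem_mk' ..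

end NormalSubgroup

lemma elementary_mem_normalClosure {x : R} (hn : 3 ≤ ENat.card n)
    (hx : TwoSidedIdeal.span {x} = ⊤) {p q i j : n} (hpq : p ≠ q) (hij : i ≠ j) (a : R) :
    elementary i j hij a ∈ Subgroup.normalClosure {elementary p q hpq x} := by
  set N := Subgroup.normalClosure {elementary p q hpq x}
  have hxN : x ∈ elementaryLevel N hn := (mem_elementaryLevel hn).2 fun k l hkl ↦
    elementary_mem_of_mem hn hpq hkl (Subgroup.subset_normalClosure rfl)
  have hN : elementaryLevel N hn = ⊤ :=
    eq_top_iff.2 (hx ▸ TwoSidedIdeal.span_le.2 (Set.singleton_subset_iff.2 hxN))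
  exact (mem_elementaryLevel hn).1 (hN ▸ trivial) i j hij

end Matrix

/-- Let `R` be an associative unital ring and `x ∈ R` generate `R` as a two-sided ideal.
Then the normal closure in `GL₃(R)` of `E₁₂(x)` contains all elementary matrices
`E_{ij}(a)` for `i ≠ j`, `a ∈ R`. -/
theorem stmt_9 (R : Type) [Ring R] (x : R)
    (hx : TwoSidedIdeal.span {x} = ⊤)
    (Ex : (Matrix (Fin 3) (Fin 3) R)ˣ)
    (hEx : Ex.val =
      (1 : Matrix (Fin 3) (Fin 3) R) + Matrix.single 0 1 x) :
    ∀ (i j : Fin 3), i ≠ j → ∀ (a : R) (M : (Matrix (Fin 3) (Fin 3) R)ˣ),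
      M.val =
        (1 : Matrix (Fin 3) (Fin 3) R) + Matrix.single i j a →
      M ∈ Subgroup.normalClosure {Ex} := by
  intro i j hij a M hM
  obtain rfl : Ex = elementary 0 1 (by decide) x := Units.ext hEx
  obtain rfl : M = elementary i j hij a := Units.ext hM
  exact elementary_mem_normalClosure (by simp) hx _ hij a
end
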